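/- arXiv:1804.06029 — 2 statements merged into one kernel-verified Lean document; each statement's English description precedes it below -/
import Mathlib

section
/- Let (X,Y) be an exactly 3-separating partition of a 3-connected matroid M, and suppose e ∈ Y. Then X ∪ {e} is 3-separating if and only if e ∈ cl(X) or e ∈ cl*(X). -/
open Set

namespace PaperDefs

variable {α : Type*}

/-- The rank of a set `X` in a matroid `M`, as an extended natural number:
the supremum of the cardinalities of independent subsets of `X`. -/
noncomputable def eRk (M : Matroid α) (X : Set α) : ℕ∞ :=
  ⨆ I ∈ {I | M.Indep I ∧ I ⊆ X}, I.encard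

/-- Deletion of a set of elements from a matroid. -/
def del (M : Matroid α) (D : Set α) : Matroid α := M.restrict (M.E \ D)

/-- Contraction of a set of elements in a matroid. -/
def con (M : Matroid α) (C : Set α) : Matroid α := (del M✶ C)✶

/-- A circuit: a minimal dependent set. -/
def Circuit (M : Matroid α) (C : Set α) : Prop :=
  M.Dep C ∧ ∀ D, D ⊂ C → M.Indep D

/-- A `k`-separation of `M`: a partition `(X, M.E \ X)` with connectivity
`λ(X) = r(X) + r(E−X) − r(M)` at most `k − 1`, and both sides of size at least `k`. -/
def kSeparation (M : Matroid α) (X : Set α) (k : ℕ) : Prop :=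
  X ⊆ M.E ∧ eRk M X + eRk M (M.E \ X) ≤ eRk M M.E + ((k - 1 : ℕ) : ℕ∞) ∧
    (k : ℕ∞) ≤ X.encard ∧ (k : ℕ∞) ≤ (M.E \ X).encard

/-- `M` is `n`-connected if it has no `k`-separations for `0 < k < n`. -/
def NConnected (M : Matroid α) (n : ℕ) : Prop :=
  ∀ k : ℕ, 0 < k → k < n → ∀ X : Set α, ¬ kSeparation M X k

/-- `X` is 3-separating in `M`: `λ_M(X) ≤ 2`. -/
def ThreeSeparating (M : Matroid α) (X : Set α) : Prop :=
  eRk M X + eRk M (M.E \ X) ≤ eRk M M.E + 2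

/-- `X` is exactly 3-separating in `M`: `λ_M(X) = 2`. -/
def ExactlyThreeSeparating (M : Matroid α) (X : Set α) : Prop :=
  eRk M X + eRk M (M.E \ X) = eRk M M.E + 2

/-- `N` is a simplification of `M`: `N` is obtained from `M` by deleting a set of
elements, `N` has no loops or parallel pairs (no circuits of size at most two), and
every element of `M` is in the closure of the ground set of `N`. -/
def IsSimplificationOf (N M : Matroid α) : Prop :=
  (∃ D ⊆ M.E, N = del M D) ∧ (∀ C, Circuit N C → 3 ≤ C.encard) ∧
    M.closure N.E = M.E

/-- `N` is a cosimplification of `M`: `N✶` is a simplification of `M✶`. -/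
def IsCosimplificationOf (N M : Matroid α) : Prop :=
  IsSimplificationOf N✶ M✶

/-- `S` is a series class of `M`: a maximal nonempty set any two distinct elements
of which form a series pair (a two-element cocircuit). -/
def IsSeriesClass (M : Matroid α) (S : Set α) : Prop :=
  S.Nonempty ∧ S ⊆ M.E ∧ (∀ a ∈ S, ∀ b ∈ S, a ≠ b → Circuit M✶ {a, b}) ∧
    (∀ a ∈ S, ∀ f, Circuit M✶ {a, f} → a ≠ f → f ∈ S)

/-- The full closure of `X` in `M`: the intersection of all sets containing `X ∩ M.E`
that are closed in both `M` and `M✶`. -/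
def fullClosure (M : Matroid α) (X : Set α) : Set α :=
  ⋂₀ {F | X ∩ M.E ⊆ F ∧ M.closure F = F ∧ M✶.closure F = F}

end PaperDefs

open PaperDefs

/-!
Write `W = E - (X ∪ e)`, so that `E - X = W ∪ e`. Passing from `X` to `X ∪ e` raises `r(X)` by
one unless `e ∈ cl(X)`, and lowers `r(E - X)` by one unless `e ∈ cl(W)`. Hence
`λ(X ∪ e) ≤ λ(X)` iff `e ∈ cl(X)` or `e ∉ cl(W)`, and `e ∉ cl(W)` says that `e` is a coloop
of `M \ X`, i.e. `e ∈ cl*(X)`. Since `λ(X) = 2`, this is the claim; 3-connectivity makes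
`r(M)` finite, so that the rank bookkeeping may be cancelled.
-/

namespace Matroid

variable {α : Type*} {M : Matroid α} {X W : Set α} {e : α}

lemma eRk_insert_eq_of_mem_closure (he : e ∈ M.closure X) : M.eRk (insert e X) = M.eRk X := by
  rw [← eRk_closure_eq, closure_insert_eq_of_mem_closure he, eRk_closure_eq]

/-- Both sides say that `e` is a coloop of `M ＼ X`. -/
lemma mem_dual_closure_iff_notMem_closure_compl (heE : e ∈ M.E) (heX : e ∉ X) :
    e ∈ M✶.closure X ↔ e ∉ M.closure (M.E \ insert e X) := by
  have heD : e ∈ (M ＼ X).E := ⟨heE, heX⟩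
  rw [← and_iff_left (a := e ∈ M✶.closure X) heX, ← contract_isLoop_iff_mem_closure,
    ← dual_delete, dual_isLoop_iff_isColoop, isColoop_iff_notMem_closure_compl heD,
    delete_closure_eq]
  have hcompl : ((M ＼ X).E \ {e}) \ X = M.E \ insert e X := by
    ext; simp only [delete_ground, mem_sdiff, mem_singleton_iff, mem_insert_iff]; tauto
  rw [hcompl, mem_sdiff, and_iff_left heX]

lemma eRk_insert_add_eRk_le_eRk_add_eRk_insert_iff (heE : e ∈ M.E) (hX : M.eRk X ≠ ⊤)
    (hW : M.eRk W ≠ ⊤) :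
    M.eRk (insert e X) + M.eRk W ≤ M.eRk X + M.eRk (insert e W) ↔
      e ∈ M.closure X ∨ e ∉ M.closure W := by
  by_cases hXe : e ∈ M.closure X
  · simp only [eRk_insert_eq_of_mem_closure hXe, hXe, true_or, iff_true]
    exact add_le_add le_rfl (M.eRk_mono (subset_insert e W))
  rw [eRk_insert_eq_add_one ⟨heE, hXe⟩]
  by_cases hWe : e ∈ M.closure W
  · rw [eRk_insert_eq_of_mem_closure hWe, add_right_comm]
    simp only [hXe, hWe, false_or, not_true_eq_false, iff_false, not_le]
    exact (ENat.lt_add_one_iff (WithTop.add_ne_top.2 ⟨hX, hW⟩)).2 le_rfl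
  · rw [eRk_insert_eq_add_one ⟨heE, hWe⟩, add_right_comm, ← add_assoc]
    simp [hWe]

lemma eRk_insert_add_eRk_compl_le_iff (hM : M.eRank ≠ ⊤) (heE : e ∈ M.E) (heX : e ∉ X) :
    M.eRk (insert e X) + M.eRk (M.E \ insert e X) ≤ M.eRk X + M.eRk (M.E \ X) ↔
      e ∈ M.closure X ∨ e ∈ M✶.closure X := by
  have hcompl : M.E \ X = insert e (M.E \ insert e X) := by
    ext; simp only [mem_sdiff, mem_insert_iff]; constructor
    · tauto
    · rintro (rfl | h) <;> tauto
  have hfin (Z : Set α) : M.eRk Z ≠ ⊤ := ne_top_of_le_ne_top hM (M.eRk_le_eRank Z)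
  rw [hcompl, eRk_insert_add_eRk_le_eRk_add_eRk_insert_iff heE (hfin _) (hfin _),
    mem_dual_closure_iff_notMem_closure_compl heE heX]

end Matroid

namespace PaperDefs

open Matroid hiding eRk

variable {α : Type*} {M : Matroid α} {e : α}

lemma eRk_eq_eRk (M : Matroid α) (X : Set α) : eRk M X = M.eRk X := by
  refine le_antisymm (iSup₂_le fun I hI => hI.1.encard_le_eRk_of_subset hI.2) ?_
  obtain ⟨I, hI⟩ := M.exists_isBasis' X
  exact hI.eRk_eq_encard ▸ le_iSup₂_of_le I ⟨hI.indep, hI.subset⟩ le_rfl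

/-- Otherwise `{e}` would be a 1-separation. -/
lemma NConnected.eRank_ne_top {n : ℕ} (h : NConnected M n) (hn : 1 < n) (he : e ∈ M.E) :
    M.eRank ≠ ⊤ := by
  intro htop
  have hinf : (M.E \ {e}).encard = ⊤ := by
    rw [encard_eq_top_iff]
    exact (encard_eq_top_iff.1 (top_le_iff.1 (htop ▸ M.eRank_le_encard_ground))).sdiff
      (finite_singleton e)
  refine h 1 one_pos hn {e} ⟨singleton_subset_iff.2 he, ?_, by simp, by simp [hinf]⟩
  simp [eRk_eq_eRk, eRk_ground, htop]

end PaperDefs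

/-- If `(X,Y)` is an exactly 3-separating partition of a 3-connected
matroid `M` and `e ∈ Y`, then `X ∪ {e}` is 3-separating iff `e ∈ cl(X)` or `e ∈ cl*(X)`. -/
theorem statement_1 {α : Type*} (M : Matroid α) (X Y : Set α) (e : α)
    (h3 : NConnected M 3) (hu : X ∪ Y = M.E) (hd : Disjoint X Y)
    (hexact : ExactlyThreeSeparating M X) (he : e ∈ Y) :
    ThreeSeparating M (X ∪ {e}) ↔ (e ∈ M.closure X ∨ e ∈ M✶.closure X) := by
  have heE : e ∈ M.E := hu ▸ Or.inr he
  have heX : e ∉ X := fun h => hd.ne_of_mem h he rfl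
  rw [ExactlyThreeSeparating] at hexact
  rw [ThreeSeparating, union_singleton, ← hexact, ← Matroid.eRk_insert_add_eRk_compl_le_iff
    (h3.eRank_ne_top (by norm_num) heE) heE heX]
  simp only [eRk_eq_eRk]
end

section
/- Let M be a 3-connected matroid, let d ∈ E(M) be such that M∖d is 3-connected, and let (S,T,Z) be a paddle in M∖d such that S and T are triads of M∖d, each of S and T is blocked by d (that is, S ∪ {d} and T ∪ {d} are cocircuits of M), and |Z| ≥ 3. Write S = {s, s2, s3} and T = {t, t2, t3} where {s2,s3,t2,t3} is independent in M∖d. Then M∖s∖t is connected. -/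
open Set

namespace Aux

open PaperDefs Set

variable {α : Type*} {M : Matroid α} {X Y I J C D P Q B R G H : Set α} {e f : α}

lemma indep_le_eRk (h : M.Indep I) (hIX : I ⊆ X) : I.encard ≤ eRk M X := by
  exact le_biSup (f := fun I : Set α => I.encard) (⟨h, hIX⟩ : I ∈ {I | M.Indep I ∧ I ⊆ X})

lemma eRk_le_iff {b : ℕ∞} : eRk M X ≤ b ↔ ∀ I, M.Indep I → I ⊆ X → I.encard ≤ b := by
  simp only [eRk, iSup₂_le_iff, mem_setOf_eq, and_imp]

lemma basis'_eRk (hI : M.IsBasis' I X) : eRk M X = I.encard := by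
  refine le_antisymm (eRk_le_iff.2 fun J hJ hJX => ?_) (indep_le_eRk hI.indep hI.subset)
  obtain ⟨K, hK, hJK⟩ := hJ.subset_isBasis'_of_subset hJX
  have h1 : (M.restrict X).IsBase K := (Matroid.isBase_restrict_iff' (M := M)).mpr hK
  have h2 : (M.restrict X).IsBase I := (Matroid.isBase_restrict_iff' (M := M)).mpr hI
  exact (encard_mono hJK).trans (h1.encard_eq_encard_of_isBase h2).le

lemma eRk_mono (h : X ⊆ Y) : eRk M X ≤ eRk M Y :=
  eRk_le_iff.2 fun I hI hIX => indep_le_eRk hI (hIX.trans h)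

lemma eRk_le_encard (M : Matroid α) (X : Set α) : eRk M X ≤ X.encard :=
  eRk_le_iff.2 fun _ _ hIX => encard_mono hIX

lemma indep_eRk (h : M.Indep I) : eRk M I = I.encard :=
  le_antisymm (eRk_le_encard M I) (indep_le_eRk h subset_rfl)

lemma eRk_empty (M : Matroid α) : eRk M (∅ : Set α) = 0 := by
  simpa using eRk_le_encard M ∅

lemma eRk_submod (M : Matroid α) (X Y : Set α) :
    eRk M (X ∪ Y) + eRk M (X ∩ Y) ≤ eRk M X + eRk M Y := by
  obtain ⟨I, hI⟩ := M.exists_isBasis' (X ∩ Y)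
  obtain ⟨J, hJ, hIJ⟩ := hI.indep.subset_isBasis'_of_subset
    (hI.subset.trans (inter_subset_left.trans subset_union_left))
  have hJX : M.Indep (J ∩ X) := hJ.indep.subset inter_subset_left
  have hJY : M.Indep (J ∩ Y) := hJ.indep.subset inter_subset_left
  have hIeq : J ∩ (X ∩ Y) = I := by
    refine (hI.eq_of_subset_indep (hJ.indep.subset inter_subset_left)
      (subset_inter hIJ hI.subset) inter_subset_right).symm
  have hcup : (J ∩ X) ∪ (J ∩ Y) = J := by
    rw [← inter_union_distrib_left]; exact inter_eq_left.2 hJ.subset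
  have hcap : (J ∩ X) ∩ (J ∩ Y) = I := by
    rw [← hIeq]; ext x; simp [mem_inter_iff]; tauto
  calc eRk M (X ∪ Y) + eRk M (X ∩ Y) = J.encard + I.encard := by
        rw [basis'_eRk hJ, basis'_eRk hI]
    _ = ((J ∩ X) ∪ (J ∩ Y)).encard + ((J ∩ X) ∩ (J ∩ Y)).encard := by rw [hcup, hcap]
    _ = (J ∩ X).encard + (J ∩ Y).encard := encard_union_add_encard_inter _ _
    _ ≤ eRk M X + eRk M Y :=
        add_le_add (indep_le_eRk hJX inter_subset_right) (indep_le_eRk hJY inter_subset_right)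

lemma eRk_subadd (M : Matroid α) (X Y : Set α) : eRk M (X ∪ Y) ≤ eRk M X + eRk M Y :=
  le_self_add.trans (eRk_submod M X Y)

lemma eRk_union_singleton_le (M : Matroid α) (X : Set α) (e : α) :
    eRk M (X ∪ {e}) ≤ eRk M X + 1 := by
  refine (eRk_subadd M X {e}).trans (add_le_add le_rfl ?_)
  exact (eRk_le_encard M {e}).trans (by simp)

lemma base_encard_eq_eRk (hB : M.IsBase B) : B.encard = eRk M M.E := by
  have : M.IsBasis' B M.E := by
    rw [← Matroid.isBase_restrict_iff', Matroid.restrict_ground_eq_self]; exact hB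
  exact (basis'_eRk this).symm

lemma eRk_compl_of_coindep (h : M✶.Indep J) : eRk M (M.E \ J) = eRk M M.E := by
  obtain ⟨hJE, B, hB, hdisj⟩ := Matroid.dual_indep_iff_exists'.1 h
  refine le_antisymm (eRk_mono diff_subset) ?_
  rw [← base_encard_eq_eRk hB]
  exact indep_le_eRk hB.indep (subset_diff.2 ⟨hB.subset_ground, hdisj.symm⟩)

lemma coindep_of_eRk_compl (hfin : eRk M M.E ≠ ⊤) (hJE : J ⊆ M.E)
    (h : eRk M M.E ≤ eRk M (M.E \ J)) : M✶.Indep J := by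
  obtain ⟨I, hI⟩ := M.exists_isBasis' (M.E \ J)
  obtain ⟨B, hB, hIB⟩ := hI.indep.exists_isBase_superset
  have hIcard : I.encard = eRk M M.E := by
    refine le_antisymm ?_ (h.trans_eq (basis'_eRk hI))
    rw [← base_encard_eq_eRk hB]; exact encard_mono hIB
  have hBfin : B.Finite := by
    rw [← encard_lt_top_iff, base_encard_eq_eRk hB]
    exact lt_top_iff_ne_top.2 hfin
  have hIB' : I = B := by
    refine hBfin.eq_of_subset_of_encard_le' hIB ?_
    rw [hIcard, base_encard_eq_eRk hB]
  refine Matroid.dual_indep_iff_exists'.2 ⟨hJE, B, hB, ?_⟩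
  rw [← hIB']
  exact (subset_diff.1 hI.subset).2.symm

/-- F1 : the complement of a cocircuit has smaller rank than the ground set. -/
lemma cocircuit_compl_lt (hfin : eRk M M.E ≠ ⊤) (hD : Circuit M✶ D) :
    eRk M (M.E \ D) + 1 ≤ eRk M M.E := by
  have hne : ¬ (eRk M M.E ≤ eRk M (M.E \ D)) := by
    intro h
    exact hD.1.not_indep (coindep_of_eRk_compl hfin hD.1.subset_ground h)
  rw [not_le] at hne
  exact Order.add_one_le_of_lt hne

/-- F2 : complement of a cocircuit plus any one element of it is spanning. -/
lemma cocircuit_compl_insert (hD : Circuit M✶ D) (he : e ∈ D) :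
    eRk M ((M.E \ D) ∪ {e}) = eRk M M.E := by
  have h1 : M✶.Indep (D \ {e}) := hD.2 _ (diff_singleton_ssubset.2 he)
  have h2 := eRk_compl_of_coindep h1
  have hDE : D ⊆ M.E := hD.1.subset_ground
  have h3 : M.E \ (D \ {e}) = (M.E \ D) ∪ {e} := by
    ext x; simp only [mem_diff, mem_union, mem_singleton_iff]
    constructor
    · rintro ⟨hx, h⟩
      by_cases hxe : x = e
      · exact Or.inr hxe
      · exact Or.inl ⟨hx, fun hxD => h ⟨hxD, hxe⟩⟩
    · rintro (⟨hx, hxD⟩ | rfl)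
      · exact ⟨hx, fun h => hxD h.1⟩
      · exact ⟨hDE he, fun h => h.2 rfl⟩
  rwa [h3] at h2

lemma dep_finite_contains_circuit (hD : M.Dep D) (hfin : D.Finite) :
    ∃ C, C ⊆ D ∧ Circuit M C := by
  obtain ⟨n, hn⟩ : ∃ n, D.ncard = n := ⟨_, rfl⟩
  induction n using Nat.strong_induction_on generalizing D with
  | _ n IH =>
    by_cases h : ∀ D', D' ⊂ D → M.Indep D'
    · exact ⟨D, subset_rfl, hD, h⟩
    · push_neg at h
      obtain ⟨D', hss, hdep⟩ := h
      have hD'E : D' ⊆ M.E := hss.subset.trans hD.subset_ground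
      have hfin' : D'.Finite := hfin.subset hss.subset
      have hlt : D'.ncard < n := hn ▸ Set.ncard_lt_ncard hss hfin
      obtain ⟨C, hCD', hC⟩ := IH _ hlt ⟨hdep, hD'E⟩ hfin' rfl
      exact ⟨C, hCD'.trans hss.subset, hC⟩

lemma circuit_spans (hC : Circuit M C) (hCfin : C.Finite) (he : e ∈ C) :
    eRk M C = eRk M (C \ {e}) := by
  have hCe : M.Indep (C \ {e}) := hC.2 _ (diff_singleton_ssubset.2 he)
  have h1 : eRk M (C \ {e}) = (C \ {e}).encard := indep_eRk hCe
  have h2 : (C \ {e}).encard + 1 = C.encard := encard_diff_singleton_add_one he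
  have hne : eRk M C ≠ C.encard := by
    intro h
    obtain ⟨I, hI⟩ := M.exists_isBasis' C
    have : I = C := by
      refine hCfin.eq_of_subset_of_encard_le' hI.subset ?_
      rw [← h, basis'_eRk hI]
    exact hC.1.not_indep (this ▸ hI.indep)
  have hle : eRk M C ≤ C.encard := eRk_le_encard M C
  have hge : eRk M (C \ {e}) ≤ eRk M C := eRk_mono diff_subset
  refine le_antisymm ?_ hge
  rw [h1]
  rcases lt_or_eq_of_le hle with h' | h'
  · exact Order.le_of_lt_add_one (h2 ▸ h' : eRk M C < (C \ {e}).encard + 1)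
  · exact absurd h' hne

/-- if `e ∈ cl(P)` and `P ⊆ Q` then `e ∈ cl(Q)`, in rank form. -/
lemma spans_mono (hfin : eRk M Q ≠ ⊤) (hP : eRk M (P ∪ {e}) ≤ eRk M P) (hPQ : P ⊆ Q) :
    eRk M (Q ∪ {e}) = eRk M Q := by
  refine le_antisymm ?_ (eRk_mono subset_union_left)
  have hsub := eRk_submod M Q (P ∪ {e})
  have h1 : Q ∪ (P ∪ {e}) = Q ∪ {e} := by
    rw [← union_assoc, union_eq_self_of_subset_right hPQ]
  have h2 : P ⊆ Q ∩ (P ∪ {e}) := subset_inter hPQ subset_union_left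
  rw [h1] at hsub
  have h3 : eRk M (Q ∪ {e}) + eRk M P ≤ eRk M Q + eRk M P :=
    calc eRk M (Q ∪ {e}) + eRk M P
        ≤ eRk M (Q ∪ {e}) + eRk M (Q ∩ (P ∪ {e})) := add_le_add le_rfl (eRk_mono h2)
      _ ≤ eRk M Q + eRk M (P ∪ {e}) := hsub
      _ ≤ eRk M Q + eRk M P := add_le_add le_rfl hP
  have hPfin : eRk M P ≠ ⊤ := by
    intro h
    exact hfin (top_le_iff.1 (h ▸ eRk_mono hPQ))
  exact WithTop.le_of_add_le_add_right hPfin h3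

/-- The local-connectivity engine: if `H` is non-spanning (rank ≤ r−1), `P ∪ H` is
spanning, and `G ⊆ P ∩ H`, then `r(G) + 1 ≤ r(P)`. -/
lemma engine (hfin : eRk M M.E ≠ ⊤) (hPE : P ⊆ M.E) (hHE : H ⊆ M.E)
    (hH1 : eRk M H + 1 ≤ eRk M M.E)
    (hspan : eRk M M.E ≤ eRk M (P ∪ H))
    (hGsub : G ⊆ P ∩ H) :
    eRk M G + 1 ≤ eRk M P := by
  have hfinX : ∀ X : Set α, X ⊆ M.E → eRk M X ≠ ⊤ :=
    fun X hX h => hfin (top_le_iff.1 (h ▸ eRk_mono hX))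
  have hsub := eRk_submod M P H
  have hG : eRk M G ≤ eRk M (P ∩ H) := eRk_mono hGsub
  have hPHle : eRk M (P ∪ H) ≤ eRk M M.E := eRk_mono (union_subset hPE hHE)
  lift eRk M M.E to ℕ using hfin with r hr
  lift eRk M P to ℕ using hfinX P hPE with p hp
  lift eRk M H to ℕ using hfinX H hHE with h hh
  lift eRk M (P ∪ H) to ℕ using hfinX _ (union_subset hPE hHE) with ph hph
  lift eRk M (P ∩ H) to ℕ using hfinX _ ((inter_subset_left).trans hPE) with pih hpih
  lift eRk M G to ℕ using hfinX G (hGsub.trans ((inter_subset_left).trans hPE)) with g hg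
  have hsub' : ph + pih ≤ p + h := by exact_mod_cast hsub
  have h1 : r ≤ ph := by exact_mod_cast hspan
  have h2 : g ≤ pih := by exact_mod_cast hG
  have h3 : h + 1 ≤ r := by exact_mod_cast hH1
  exact_mod_cast (by omega : g + 1 ≤ p)

/-- Combining two engine outputs. -/
lemma combine2 (hfin : eRk M M.E ≠ ⊤) {P G1 G2 Z1 : Set α} (hPE : P ⊆ M.E)
    (hu : G1 ∪ G2 = P) (hZ1 : Z1 ⊆ G1 ∩ G2)
    (h1 : eRk M G1 + 1 ≤ eRk M P) (h2 : eRk M G2 + 1 ≤ eRk M P) :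
    eRk M Z1 + 2 ≤ eRk M P := by
  have hfinX : ∀ X : Set α, X ⊆ M.E → eRk M X ≠ ⊤ :=
    fun X hX h => hfin (top_le_iff.1 (h ▸ eRk_mono hX))
  have hG1E : G1 ⊆ M.E := (subset_union_left.trans hu.subset).trans hPE
  have hG2E : G2 ⊆ M.E := (subset_union_right.trans hu.subset).trans hPE
  have hsub := eRk_submod M G1 G2
  rw [hu] at hsub
  have hZle : eRk M Z1 ≤ eRk M (G1 ∩ G2) := eRk_mono hZ1
  lift eRk M P to ℕ using hfinX P hPE with p hp
  lift eRk M G1 to ℕ using hfinX _ hG1E with g1 hg1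
  lift eRk M G2 to ℕ using hfinX _ hG2E with g2 hg2
  lift eRk M (G1 ∩ G2) to ℕ using hfinX _ ((inter_subset_left).trans hG1E) with g12 hg12
  lift eRk M Z1 to ℕ using hfinX _ (hZ1.trans ((inter_subset_left).trans hG1E)) with z1 hz1
  have h1' : g1 + 1 ≤ p := by exact_mod_cast h1
  have h2' : g2 + 1 ≤ p := by exact_mod_cast h2
  have hsub' : p + g12 ≤ g1 + g2 := by exact_mod_cast hsub
  have hZle' : z1 ≤ g12 := by exact_mod_cast hZle
  exact_mod_cast (by omega : z1 + 2 ≤ p)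

lemma del_eRk (M : Matroid α) (D X : Set α) (hX : X ⊆ M.E \ D) :
    eRk (del M D) X = eRk M X := by
  simp only [del]
  refine le_antisymm (eRk_le_iff.2 fun I hI hIX => indep_le_eRk ?_ hIX)
    (eRk_le_iff.2 fun I hI hIX => indep_le_eRk ?_ hIX)
  · exact (Matroid.restrict_indep_iff.1 hI).1
  · exact Matroid.restrict_indep_iff.2 ⟨hI, hIX.trans hX⟩

end Aux

open PaperDefs

set_option maxHeartbeats 3000000 in
/-- Let `M` be 3-connected with `M ∖ d` 3-connected, and let
`(S,T,Z)` be a paddle of `M ∖ d` in which `S` and `T` are triads of `M ∖ d`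
blocked by `d` (so `S ∪ {d}` and `T ∪ {d}` are cocircuits of `M`), `|Z| ≥ 3`,
with `S = {s,s2,s3}`, `T = {t,t2,t3}` and `{s2,s3,t2,t3}` independent in `M ∖ d`.
Then `M ∖ s ∖ t` is connected. -/
theorem statement_12 {α : Type*} (M : Matroid α) (d s s2 s3 t t2 t3 : α) (Z : Set α)
    (h3 : NConnected M 3) (hd : d ∈ M.E)
    (hdel3 : NConnected (del M {d}) 3)
    (hdist : ({d, s, s2, s3, t, t2, t3} : Set α).encard = 7)
    (hS : Circuit (del M {d})✶ {s, s2, s3})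
    (hT : Circuit (del M {d})✶ {t, t2, t3})
    (hZ : Z = M.E \ {d, s, s2, s3, t, t2, t3})
    (hZcard : 3 ≤ Z.encard)
    (hsepS : ThreeSeparating (del M {d}) {s, s2, s3})
    (hsepT : ThreeSeparating (del M {d}) {t, t2, t3})
    (hsepZ : ThreeSeparating (del M {d}) Z)
    (hlocST : eRk (del M {d}) {s, s2, s3} + eRk (del M {d}) {t, t2, t3}
      = eRk (del M {d}) ({s, s2, s3} ∪ {t, t2, t3}) + 2)
    (hlocSZ : eRk (del M {d}) {s, s2, s3} + eRk (del M {d}) Z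
      = eRk (del M {d}) ({s, s2, s3} ∪ Z) + 2)
    (hlocTZ : eRk (del M {d}) {t, t2, t3} + eRk (del M {d}) Z
      = eRk (del M {d}) ({t, t2, t3} ∪ Z) + 2)
    (hblockS : Circuit M✶ {s, s2, s3, d})
    (hblockT : Circuit M✶ {t, t2, t3, d})
    (hindep : (del M {d}).Indep {s2, s3, t2, t3}) :
    NConnected (del M {s, t}) 2 := by
  classical
  -- memberships
  have hAsub : ({s, s2, s3, d} : Set α) ⊆ M.E := hblockS.1.subset_ground
  have hBsub : ({t, t2, t3, d} : Set α) ⊆ M.E := hblockT.1.subset_ground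
  have hsE : s ∈ M.E := hAsub (by simp)
  have hs2E : s2 ∈ M.E := hAsub (by simp)
  have hs3E : s3 ∈ M.E := hAsub (by simp)
  have htE : t ∈ M.E := hBsub (by simp)
  have ht2E : t2 ∈ M.E := hBsub (by simp)
  have ht3E : t3 ∈ M.E := hBsub (by simp)
  -- cardinality bounds for explicit sets
  have hb1 : ∀ x6 : α, ({x6} : Set α).encard ≤ 1 := by simp
  have hb2 : ∀ x5 x6 : α, ({x5, x6} : Set α).encard ≤ 2 := by
    intro x5 x6
    calc ({x5, x6} : Set α).encard ≤ ({x6} : Set α).encard + 1 := encard_insert_le _ _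
      _ ≤ 1 + 1 := add_le_add_left (hb1 x6) 1
      _ = 2 := by norm_num
  have hb3 : ∀ x4 x5 x6 : α, ({x4, x5, x6} : Set α).encard ≤ 3 := by
    intro x4 x5 x6
    calc ({x4, x5, x6} : Set α).encard ≤ ({x5, x6} : Set α).encard + 1 := encard_insert_le _ _
      _ ≤ 2 + 1 := add_le_add_left (hb2 x5 x6) 1
      _ = 3 := by norm_num
  have hb4 : ∀ x3 x4 x5 x6 : α, ({x3, x4, x5, x6} : Set α).encard ≤ 4 := by
    intro x3 x4 x5 x6
    calc ({x3, x4, x5, x6} : Set α).encard ≤ ({x4, x5, x6} : Set α).encard + 1 :=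
          encard_insert_le _ _
      _ ≤ 3 + 1 := add_le_add_left (hb3 x4 x5 x6) 1
      _ = 4 := by norm_num
  have hb5 : ∀ x2 x3 x4 x5 x6 : α, ({x2, x3, x4, x5, x6} : Set α).encard ≤ 5 := by
    intro x2 x3 x4 x5 x6
    calc ({x2, x3, x4, x5, x6} : Set α).encard ≤ ({x3, x4, x5, x6} : Set α).encard + 1 :=
          encard_insert_le _ _
      _ ≤ 4 + 1 := add_le_add_left (hb4 x3 x4 x5 x6) 1
      _ = 5 := by norm_num
  have hb6 : ∀ x1 x2 x3 x4 x5 x6 : α, ({x1, x2, x3, x4, x5, x6} : Set α).encard ≤ 6 := by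
    intro x1 x2 x3 x4 x5 x6
    calc ({x1, x2, x3, x4, x5, x6} : Set α).encard
        ≤ ({x2, x3, x4, x5, x6} : Set α).encard + 1 := encard_insert_le _ _
      _ ≤ 5 + 1 := add_le_add_left (hb5 x2 x3 x4 x5 x6) 1
      _ = 6 := by norm_num
  -- peeling distinctness
  have hpeel : ∀ (a : α) (X : Set α) (n : ℕ∞), n ≠ ⊤ → (insert a X).encard = n + 1 →
      X.encard ≤ n → a ∉ X ∧ X.encard = n := by
    intro a X n hn h hle
    by_cases ha : a ∈ X
    · rw [insert_eq_self.2 ha] at h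
      rw [h] at hle
      exact absurd ((ENat.add_one_le_iff hn).1 hle) (lt_irrefl n)
    · refine ⟨ha, ?_⟩
      rw [encard_insert_of_notMem ha] at h
      exact WithTop.add_right_cancel (by simp : (1 : ℕ∞) ≠ ⊤) h
  obtain ⟨hdnm, hc6⟩ := hpeel d {s, s2, s3, t, t2, t3} 6 (by simp)
    (by rw [show ((6 : ℕ∞) + 1) = 7 by norm_num]; exact hdist) (hb6 _ _ _ _ _ _)
  obtain ⟨hsnm, hc5⟩ := hpeel s {s2, s3, t, t2, t3} 5 (by simp)
    (by rw [show ((5 : ℕ∞) + 1) = 6 by norm_num]; exact hc6) (hb5 _ _ _ _ _)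
  obtain ⟨hs2nm, hc4⟩ := hpeel s2 {s3, t, t2, t3} 4 (by simp)
    (by rw [show ((4 : ℕ∞) + 1) = 5 by norm_num]; exact hc5) (hb4 _ _ _ _)
  obtain ⟨hs3nm, hc3⟩ := hpeel s3 {t, t2, t3} 3 (by simp)
    (by rw [show ((3 : ℕ∞) + 1) = 4 by norm_num]; exact hc4) (hb3 _ _ _)
  obtain ⟨htnm, hc2⟩ := hpeel t {t2, t3} 2 (by simp)
    (by rw [show ((2 : ℕ∞) + 1) = 3 by norm_num]; exact hc3) (hb2 _ _)
  obtain ⟨ht2nm, _⟩ := hpeel t2 {t3} 1 (by simp)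
    (by rw [show ((1 : ℕ∞) + 1) = 2 by norm_num]; exact hc2) (hb1 _)
  simp only [mem_insert_iff, mem_singleton_iff, not_or] at hdnm hsnm hs2nm hs3nm htnm ht2nm
  obtain ⟨hd_s, hd_s2, hd_s3, hd_t, hd_t2, hd_t3⟩ := hdnm
  obtain ⟨hs_s2, hs_s3, hs_t, hs_t2, hs_t3⟩ := hsnm
  obtain ⟨hs2_s3, hs2_t, hs2_t2, hs2_t3⟩ := hs2nm
  obtain ⟨hs3_t, hs3_t2, hs3_t3⟩ := hs3nm
  obtain ⟨ht_t2, ht_t3⟩ := htnm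
  have ht2_t3 : t2 ≠ t3 := ht2nm
  -- finite rank
  have hrfin : eRk M M.E ≠ ⊤ := by
    intro htop
    refine h3 1 one_pos (by norm_num) {d} ⟨singleton_subset_iff.2 hd, ?_, by simp, ?_⟩
    · rw [htop]; exact le_top
    · have hne : (M.E \ {d}).Nonempty := ⟨s, hsE, fun h => hd_s (mem_singleton_iff.1 h).symm⟩
      simp only [Nat.cast_one]
      exact Set.one_le_encard_iff_nonempty.2 hne
  have hfinX : ∀ X : Set α, X ⊆ M.E → eRk M X ≠ ⊤ :=
    fun X hX h => hrfin (top_le_iff.1 (h ▸ Aux.eRk_mono hX))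
  -- Z membership utilities
  have hZE : Z ⊆ M.E := by rw [hZ]; exact diff_subset
  have hZn : ∀ x ∈ Z, x ≠ d ∧ x ≠ s ∧ x ≠ s2 ∧ x ≠ s3 ∧ x ≠ t ∧ x ≠ t2 ∧ x ≠ t3 := by
    intro x hx
    rw [hZ] at hx
    have h := hx.2
    simp only [mem_insert_iff, mem_singleton_iff, not_or] at h
    exact h
  have hmemZ : ∀ x, x ∈ M.E → x ≠ d → x ≠ s → x ≠ s2 → x ≠ s3 → x ≠ t → x ≠ t2 → x ≠ t3 →
      x ∈ Z := by
    intro x hxE h1 h2 h3' h4 h5 h6 h7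
    rw [hZ]
    exact ⟨hxE, by simp [h1, h2, h3', h4, h5, h6, h7]⟩
  -- complement identities for the two cocircuits
  have hEA : M.E \ ({s, s2, s3, d} : Set α) = {t, t2, t3} ∪ Z := by
    ext x
    simp only [mem_diff, mem_union, mem_insert_iff, mem_singleton_iff, not_or]
    constructor
    · rintro ⟨hxE, hx1, hx2, hx3, hx4⟩
      by_cases h1 : x = t; · exact Or.inl (Or.inl h1)
      by_cases h2 : x = t2; · exact Or.inl (Or.inr (Or.inl h2))
      by_cases h3' : x = t3; · exact Or.inl (Or.inr (Or.inr h3'))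
      exact Or.inr (hmemZ x hxE hx4 hx1 hx2 hx3 h1 h2 h3')
    · rintro ((rfl | rfl | rfl) | hxZ)
      · exact ⟨htE, Ne.symm hs_t, Ne.symm hs2_t, Ne.symm hs3_t, Ne.symm hd_t⟩
      · exact ⟨ht2E, Ne.symm hs_t2, Ne.symm hs2_t2, Ne.symm hs3_t2, Ne.symm hd_t2⟩
      · exact ⟨ht3E, Ne.symm hs_t3, Ne.symm hs2_t3, Ne.symm hs3_t3, Ne.symm hd_t3⟩
      · obtain ⟨H1, H2, H3, H4, _, _, _⟩ := hZn x hxZ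
        exact ⟨hZE hxZ, H2, H3, H4, H1⟩
  have hEB : M.E \ ({t, t2, t3, d} : Set α) = {s, s2, s3} ∪ Z := by
    ext x
    simp only [mem_diff, mem_union, mem_insert_iff, mem_singleton_iff, not_or]
    constructor
    · rintro ⟨hxE, hx1, hx2, hx3, hx4⟩
      by_cases h1 : x = s; · exact Or.inl (Or.inl h1)
      by_cases h2 : x = s2; · exact Or.inl (Or.inr (Or.inl h2))
      by_cases h3' : x = s3; · exact Or.inl (Or.inr (Or.inr h3'))
      exact Or.inr (hmemZ x hxE hx4 h1 h2 h3' hx1 hx2 hx3)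
    · rintro ((rfl | rfl | rfl) | hxZ)
      · exact ⟨hsE, hs_t, hs_t2, hs_t3, Ne.symm hd_s⟩
      · exact ⟨hs2E, hs2_t, hs2_t2, hs2_t3, Ne.symm hd_s2⟩
      · exact ⟨hs3E, hs3_t, hs3_t2, hs3_t3, Ne.symm hd_s3⟩
      · obtain ⟨H1, _, _, _, H5, H6, H7⟩ := hZn x hxZ
        exact ⟨hZE hxZ, H5, H6, H7, H1⟩
  -- F1 and F2 for the two cocircuits of M
  have hTZ1 : eRk M ({t, t2, t3} ∪ Z) + 1 ≤ eRk M M.E := by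
    have h := Aux.cocircuit_compl_lt hrfin hblockS
    rwa [hEA] at h
  have hSZ1 : eRk M ({s, s2, s3} ∪ Z) + 1 ≤ eRk M M.E := by
    have h := Aux.cocircuit_compl_lt hrfin hblockT
    rwa [hEB] at h
  have hF2A : ∀ e ∈ ({s, s2, s3, d} : Set α), eRk M (({t, t2, t3} ∪ Z) ∪ {e}) = eRk M M.E := by
    intro e he
    have h := Aux.cocircuit_compl_insert hblockS he
    rwa [hEA] at h
  have hF2B : ∀ e ∈ ({t, t2, t3, d} : Set α), eRk M (({s, s2, s3} ∪ Z) ∪ {e}) = eRk M M.E := by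
    intro e he
    have h := Aux.cocircuit_compl_insert hblockT he
    rwa [hEB] at h
  -- subsets of M.E \ {d}
  have hS_subEd : ({s, s2, s3} : Set α) ⊆ M.E \ {d} := by
    intro x hx
    simp only [mem_insert_iff, mem_singleton_iff] at hx
    rcases hx with rfl | rfl | rfl
    · exact ⟨hsE, fun h => hd_s (mem_singleton_iff.1 h).symm⟩
    · exact ⟨hs2E, fun h => hd_s2 (mem_singleton_iff.1 h).symm⟩
    · exact ⟨hs3E, fun h => hd_s3 (mem_singleton_iff.1 h).symm⟩
  have hT_subEd : ({t, t2, t3} : Set α) ⊆ M.E \ {d} := by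
    intro x hx
    simp only [mem_insert_iff, mem_singleton_iff] at hx
    rcases hx with rfl | rfl | rfl
    · exact ⟨htE, fun h => hd_t (mem_singleton_iff.1 h).symm⟩
    · exact ⟨ht2E, fun h => hd_t2 (mem_singleton_iff.1 h).symm⟩
    · exact ⟨ht3E, fun h => hd_t3 (mem_singleton_iff.1 h).symm⟩
  have hZ_subEd : Z ⊆ M.E \ {d} := by
    intro x hx
    exact ⟨hZE hx, fun h => (hZn x hx).1 (mem_singleton_iff.1 h)⟩
  -- transfer the paddle hypotheses to M
  have hlocST' : eRk M {s, s2, s3} + eRk M {t, t2, t3}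
      = eRk M ({s, s2, s3} ∪ {t, t2, t3}) + 2 := by
    rw [← Aux.del_eRk M {d} {s, s2, s3} hS_subEd, ← Aux.del_eRk M {d} {t, t2, t3} hT_subEd,
      ← Aux.del_eRk M {d} ({s, s2, s3} ∪ {t, t2, t3}) (union_subset hS_subEd hT_subEd)]
    exact hlocST
  have hlocSZ' : eRk M {s, s2, s3} + eRk M Z = eRk M ({s, s2, s3} ∪ Z) + 2 := by
    rw [← Aux.del_eRk M {d} {s, s2, s3} hS_subEd, ← Aux.del_eRk M {d} Z hZ_subEd,
      ← Aux.del_eRk M {d} ({s, s2, s3} ∪ Z) (union_subset hS_subEd hZ_subEd)]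
    exact hlocSZ
  have hlocTZ' : eRk M {t, t2, t3} + eRk M Z = eRk M ({t, t2, t3} ∪ Z) + 2 := by
    rw [← Aux.del_eRk M {d} {t, t2, t3} hT_subEd, ← Aux.del_eRk M {d} Z hZ_subEd,
      ← Aux.del_eRk M {d} ({t, t2, t3} ∪ Z) (union_subset hT_subEd hZ_subEd)]
    exact hlocTZ
  have hWind : M.Indep {s2, s3, t2, t3} := by
    have h := hindep
    simp only [del] at h
    exact (Matroid.restrict_indep_iff.1 h).1
  -- ranks of the small sets
  have hWcard : ({s2, s3, t2, t3} : Set α).encard = 4 := by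
    rw [encard_insert_of_notMem (by simp [hs2_s3, hs2_t2, hs2_t3]),
      encard_insert_of_notMem (by simp [hs3_t2, hs3_t3]),
      encard_insert_of_notMem (by simp [ht2_t3]), encard_singleton]
    norm_num
  have hW4 : eRk M {s2, s3, t2, t3} = 4 := by rw [Aux.indep_eRk hWind, hWcard]
  have hS_subE : ({s, s2, s3} : Set α) ⊆ M.E := hS_subEd.trans diff_subset
  have hT_subE : ({t, t2, t3} : Set α) ⊆ M.E := hT_subEd.trans diff_subset
  have hkey : eRk M {s, s2, s3} = 3 ∧ eRk M {t, t2, t3} = 3 ∧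
      eRk M ({s, s2, s3} ∪ {t, t2, t3}) = 4 := by
    have h1 : (4 : ℕ∞) ≤ eRk M ({s, s2, s3} ∪ {t, t2, t3}) := by
      rw [← hW4]
      refine Aux.eRk_mono ?_
      intro x hx
      simp only [mem_insert_iff, mem_singleton_iff, mem_union] at hx ⊢
      tauto
    have h2 : eRk M {s, s2, s3} ≤ 3 := (Aux.eRk_le_encard _ _).trans (hb3 _ _ _)
    have h3' : eRk M {t, t2, t3} ≤ 3 := (Aux.eRk_le_encard _ _).trans (hb3 _ _ _)
    lift eRk M {s, s2, s3} to ℕ using hfinX _ hS_subE with eS heS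
    lift eRk M {t, t2, t3} to ℕ using hfinX _ hT_subE with eT heT
    lift eRk M ({s, s2, s3} ∪ {t, t2, t3}) to ℕ
      using hfinX _ (union_subset hS_subE hT_subE) with eST heST
    have c1 : 4 ≤ eST := by exact_mod_cast h1
    have c2 : eS ≤ 3 := by exact_mod_cast h2
    have c3 : eT ≤ 3 := by exact_mod_cast h3'
    have c4 : eS + eT = eST + 2 := by exact_mod_cast hlocST'
    refine ⟨?_, ?_, ?_⟩
    · exact_mod_cast (show eS = 3 by omega)
    · exact_mod_cast (show eT = 3 by omega)
    · exact_mod_cast (show eST = 4 by omega)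
  obtain ⟨hS3, hT3, hST4⟩ := hkey
  -- rank of Z and the two hyperplanes
  have hSZ_subE : ({s, s2, s3} : Set α) ∪ Z ⊆ M.E := union_subset hS_subE hZE
  have hTZ_subE : ({t, t2, t3} : Set α) ∪ Z ⊆ M.E := union_subset hT_subE hZE
  have hZchain : eRk M Z + 2 = eRk M M.E ∧ eRk M ({s, s2, s3} ∪ Z) + 1 = eRk M M.E ∧
      eRk M ({t, t2, t3} ∪ Z) + 1 = eRk M M.E := by
    have hsubm := Aux.eRk_submod M ({s, s2, s3} ∪ Z) ({t, t2, t3} ∪ Z)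
    have hsp : eRk M M.E ≤ eRk M (({s, s2, s3} ∪ Z) ∪ ({t, t2, t3} ∪ Z)) := by
      rw [← hF2A s (by simp)]
      refine Aux.eRk_mono ?_
      intro x hx
      rcases hx with h | h
      · exact Or.inr h
      · exact Or.inl (Or.inl (by simp at h; simp [h]))
    have hint : eRk M Z ≤ eRk M ((({s, s2, s3} ∪ Z)) ∩ ({t, t2, t3} ∪ Z)) :=
      Aux.eRk_mono (subset_inter subset_union_right subset_union_right)
    rw [hS3] at hlocSZ'
    rw [hT3] at hlocTZ'
    lift eRk M M.E to ℕ using hrfin with r hr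
    lift eRk M Z to ℕ using hfinX _ hZE with eZ heZ
    lift eRk M ({s, s2, s3} ∪ Z) to ℕ using hfinX _ hSZ_subE with eSZ heSZ
    lift eRk M ({t, t2, t3} ∪ Z) to ℕ using hfinX _ hTZ_subE with eTZ heTZ
    lift eRk M (({s, s2, s3} ∪ Z) ∪ ({t, t2, t3} ∪ Z)) to ℕ
      using hfinX _ (union_subset hSZ_subE hTZ_subE) with eU heU
    lift eRk M ((({s, s2, s3} ∪ Z)) ∩ ({t, t2, t3} ∪ Z)) to ℕ
      using hfinX _ ((inter_subset_left).trans hSZ_subE) with eI heI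
    have c1 : eU + eI ≤ eSZ + eTZ := by exact_mod_cast hsubm
    have c2 : r ≤ eU := by exact_mod_cast hsp
    have c3 : eZ ≤ eI := by exact_mod_cast hint
    have c4 : 3 + eZ = eSZ + 2 := by exact_mod_cast hlocSZ'
    have c5 : 3 + eZ = eTZ + 2 := by exact_mod_cast hlocTZ'
    have c6 : eSZ + 1 ≤ r := by exact_mod_cast hSZ1
    refine ⟨?_, ?_, ?_⟩
    · exact_mod_cast (show eZ + 2 = r by omega)
    · exact_mod_cast (show eSZ + 1 = r by omega)
    · exact_mod_cast (show eTZ + 1 = r by omega)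
  obtain ⟨hZr, hSZr, hTZr⟩ := hZchain
  -- E \ {s,t,d} is spanning
  have hWsubE' : ({s2, s3, t2, t3} : Set α) ⊆ M.E \ {s, t, d} := by
    intro x hx
    simp only [mem_insert_iff, mem_singleton_iff] at hx
    simp only [mem_diff, mem_insert_iff, mem_singleton_iff, not_or]
    rcases hx with rfl | rfl | rfl | rfl
    · exact ⟨hs2E, Ne.symm hs_s2, hs2_t, Ne.symm hd_s2⟩
    · exact ⟨hs3E, Ne.symm hs_s3, hs3_t, Ne.symm hd_s3⟩
    · exact ⟨ht2E, Ne.symm hs_t2, Ne.symm ht_t2, Ne.symm hd_t2⟩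
    · exact ⟨ht3E, Ne.symm hs_t3, Ne.symm ht_t3, Ne.symm hd_t3⟩
  have hZsubE' : Z ⊆ M.E \ {s, t, d} := by
    intro x hx
    obtain ⟨H1, H2, _, _, H5, _, _⟩ := hZn x hx
    simp only [mem_diff, mem_insert_iff, mem_singleton_iff, not_or]
    exact ⟨hZE hx, H2, H5, H1⟩
  have hE'r : eRk M (M.E \ {s, t, d}) = eRk M M.E := by
    have hWt : eRk M (({s2, s3, t2, t3} : Set α) ∪ {t}) ≤ eRk M {s2, s3, t2, t3} := by
      rw [hW4]
      have : (({s2, s3, t2, t3} : Set α) ∪ {t}) ⊆ {s, s2, s3} ∪ {t, t2, t3} := by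
        intro x hx
        simp only [mem_union, mem_insert_iff, mem_singleton_iff] at hx ⊢
        rcases hx with (rfl | rfl | rfl | rfl) | rfl
        · exact Or.inl (Or.inr (Or.inl rfl))
        · exact Or.inl (Or.inr (Or.inr rfl))
        · exact Or.inr (Or.inr (Or.inl rfl))
        · exact Or.inr (Or.inr (Or.inr rfl))
        · exact Or.inr (Or.inl rfl)
      exact (Aux.eRk_mono this).trans_eq hST4
    have hsp := Aux.spans_mono (hfinX _ diff_subset) hWt hWsubE'
    refine le_antisymm (Aux.eRk_mono diff_subset) ?_
    rw [← hsp, ← hF2A s2 (by simp)]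
    refine Aux.eRk_mono ?_
    intro x hx
    rcases hx with h | h
    · rcases h with h' | h'
      · simp only [mem_insert_iff, mem_singleton_iff] at h'
        rcases h' with rfl | rfl | rfl
        · exact Or.inr (by simp)
        · exact Or.inl (hWsubE' (by simp))
        · exact Or.inl (hWsubE' (by simp))
      · exact Or.inl (hZsubE' h')
    · simp only [mem_singleton_iff] at h
      exact Or.inl (hWsubE' (by simp [h]))
  have hNEr : eRk M (M.E \ {s, t}) = eRk M M.E := by
    refine le_antisymm (Aux.eRk_mono diff_subset) ?_
    rw [← hE'r]
    refine Aux.eRk_mono (diff_subset_diff_right ?_)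
    intro x hx
    simp only [mem_insert_iff, mem_singleton_iff] at hx ⊢
    rcases hx with rfl | rfl
    · exact Or.inl rfl
    · exact Or.inr (Or.inl rfl)
  -- decomposition of E \ {s,t,d}
  have hE'subZW : M.E \ {s, t, d} ⊆ Z ∪ ({s2, s3, t2, t3} : Set α) := by
    intro x hx
    obtain ⟨hxE, hxn⟩ := hx
    simp only [mem_insert_iff, mem_singleton_iff, not_or] at hxn
    by_cases h1 : x = s2
    · exact Or.inr (by simp [h1])
    by_cases h2 : x = s3
    · exact Or.inr (by simp [h2])
    by_cases h3' : x = t2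
    · exact Or.inr (by simp [h3'])
    by_cases h4 : x = t3
    · exact Or.inr (by simp [h4])
    exact Or.inl (hmemZ x hxE hxn.2.2 hxn.1 h1 h2 hxn.2.1 h3' h4)
  -- THE CORE LEMMA
  have hcore : ∀ U V : Set α, U ∪ V = M.E \ {s, t, d} → Disjoint U V → V.Nonempty →
      eRk M (U ∪ {d}) + eRk M V ≤ eRk M M.E → False := by
    intro U V hUV hdisj hVne hsum
    have hUsubE' : U ⊆ M.E \ {s, t, d} := hUV ▸ subset_union_left
    have hVsubE' : V ⊆ M.E \ {s, t, d} := hUV ▸ subset_union_right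
    have hUsubE : U ⊆ M.E := hUsubE'.trans diff_subset
    have hVsubE : V ⊆ M.E := hVsubE'.trans diff_subset
    have hUdsubE : U ∪ {d} ⊆ M.E := union_subset hUsubE (by simpa using hd)
    have hge : eRk M M.E ≤ eRk M U + eRk M V := by
      rw [← hE'r, ← hUV]
      exact Aux.eRk_subadd M U V
    have hmono1 : eRk M U ≤ eRk M (U ∪ {d}) := Aux.eRk_mono subset_union_left
    have hkey2 : eRk M U + eRk M V = eRk M M.E ∧ eRk M (U ∪ {d}) = eRk M U := by
      lift eRk M M.E to ℕ using hrfin with r hr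
      lift eRk M U to ℕ using hfinX _ hUsubE with u hu
      lift eRk M V to ℕ using hfinX _ hVsubE with v hv
      lift eRk M (U ∪ {d}) to ℕ using hfinX _ hUdsubE with ud hud
      have c1 : ud + v ≤ r := by exact_mod_cast hsum
      have c2 : r ≤ u + v := by exact_mod_cast hge
      have c3 : u ≤ ud := by exact_mod_cast hmono1
      constructor
      · exact_mod_cast (show u + v = r by omega)
      · exact_mod_cast (show ud = u by omega)
    obtain ⟨huv, hUd⟩ := hkey2
    -- engine on the U side (unconditional)
    have hengU_A : eRk M ((U ∩ Z) ∪ (U ∩ {t2, t3})) + 1 ≤ eRk M U := by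
      rw [← hUd]
      refine Aux.engine hrfin hUdsubE hTZ_subE hTZr.le ?_ ?_
      · rw [← hF2A d (by simp)]
        refine Aux.eRk_mono ?_
        intro x hx
        rcases hx with h | h
        · exact Or.inr h
        · exact Or.inl (Or.inr h)
      · refine subset_inter ?_ ?_
        · exact union_subset (inter_subset_left.trans subset_union_left)
            (inter_subset_left.trans subset_union_left)
        · refine union_subset (inter_subset_right.trans subset_union_right) ?_
          exact inter_subset_right.trans ((subset_insert t {t2, t3}).trans subset_union_left)
    have hengU_B : eRk M ((U ∩ Z) ∪ (U ∩ {s2, s3})) + 1 ≤ eRk M U := by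
      rw [← hUd]
      refine Aux.engine hrfin hUdsubE hSZ_subE hSZr.le ?_ ?_
      · rw [← hF2B d (by simp)]
        refine Aux.eRk_mono ?_
        intro x hx
        rcases hx with h | h
        · exact Or.inr h
        · exact Or.inl (Or.inr h)
      · refine subset_inter ?_ ?_
        · exact union_subset (inter_subset_left.trans subset_union_left)
            (inter_subset_left.trans subset_union_left)
        · refine union_subset (inter_subset_right.trans subset_union_right) ?_
          exact inter_subset_right.trans ((subset_insert s {s2, s3}).trans subset_union_left)
    have hUdecomp : ((U ∩ Z) ∪ (U ∩ {s2, s3})) ∪ ((U ∩ Z) ∪ (U ∩ {t2, t3})) = U := by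
      apply Subset.antisymm
      · exact union_subset (union_subset inter_subset_left inter_subset_left)
          (union_subset inter_subset_left inter_subset_left)
      · intro x hx
        have hx' : x ∈ Z ∪ ({s2, s3, t2, t3} : Set α) := hE'subZW (hUsubE' hx)
        rcases hx' with h | h
        · exact Or.inl (Or.inl ⟨hx, h⟩)
        · simp only [mem_insert_iff, mem_singleton_iff] at h
          rcases h with rfl | rfl | rfl | rfl
          · exact Or.inl (Or.inr ⟨hx, by simp⟩)
          · exact Or.inl (Or.inr ⟨hx, by simp⟩)
          · exact Or.inr (Or.inr ⟨hx, by simp⟩)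
          · exact Or.inr (Or.inr ⟨hx, by simp⟩)
    have hcombU : eRk M (U ∩ Z) + 2 ≤ eRk M U :=
      Aux.combine2 hrfin hUsubE hUdecomp
        (subset_inter subset_union_left subset_union_left) hengU_B hengU_A
    -- Z splits across U and V
    have hZdec : (U ∩ Z) ∪ (V ∩ Z) = Z := by
      apply Subset.antisymm
      · exact union_subset inter_subset_right inter_subset_right
      · intro x hx
        have hx' : x ∈ U ∪ V := hUV.symm ▸ hZsubE' hx
        rcases hx' with h | h
        · exact Or.inl ⟨h, hx⟩
        · exact Or.inr ⟨h, hx⟩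
    have hZsplit : eRk M Z ≤ eRk M (U ∩ Z) + eRk M (V ∩ Z) := by
      have h := Aux.eRk_subadd M (U ∩ Z) (V ∩ Z)
      rwa [hZdec] at h
    -- the contradiction given r(V∩Z) + 1 ≤ r(V)
    have hfinish : eRk M (V ∩ Z) + 1 ≤ eRk M V → False := by
      intro hV1
      lift eRk M M.E to ℕ using hrfin with r hr
      lift eRk M U to ℕ using hfinX _ hUsubE with u hu
      lift eRk M V to ℕ using hfinX _ hVsubE with v hv
      lift eRk M Z to ℕ using hfinX _ hZE with z hz
      lift eRk M (U ∩ Z) to ℕ using hfinX _ (inter_subset_left.trans hUsubE) with zu hzu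
      lift eRk M (V ∩ Z) to ℕ using hfinX _ (inter_subset_left.trans hVsubE) with zv hzv
      have c1 : zu + 2 ≤ u := by exact_mod_cast hcombU
      have c2 : zv + 1 ≤ v := by exact_mod_cast hV1
      have c3 : z ≤ zu + zv := by exact_mod_cast hZsplit
      have c4 : u + v = r := by exact_mod_cast huv
      have c5 : z + 2 = r := by exact_mod_cast hZr
      omega
    by_cases hA : s2 ∈ V ∨ s3 ∈ V
    · refine hfinish ?_
      refine Aux.engine hrfin hVsubE hTZ_subE hTZr.le ?_
        (subset_inter inter_subset_left (inter_subset_right.trans subset_union_right))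
      rcases hA with h | h
      · rw [← hF2A s2 (by simp)]
        refine Aux.eRk_mono ?_
        intro x hx
        rcases hx with hx | hx
        · exact Or.inr hx
        · exact Or.inl (by rwa [mem_singleton_iff.1 hx])
      · rw [← hF2A s3 (by simp)]
        refine Aux.eRk_mono ?_
        intro x hx
        rcases hx with hx | hx
        · exact Or.inr hx
        · exact Or.inl (by rwa [mem_singleton_iff.1 hx])
    by_cases hB : t2 ∈ V ∨ t3 ∈ V
    · refine hfinish ?_
      refine Aux.engine hrfin hVsubE hSZ_subE hSZr.le ?_
        (subset_inter inter_subset_left (inter_subset_right.trans subset_union_right))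
      rcases hB with h | h
      · rw [← hF2B t2 (by simp)]
        refine Aux.eRk_mono ?_
        intro x hx
        rcases hx with hx | hx
        · exact Or.inr hx
        · exact Or.inl (by rwa [mem_singleton_iff.1 hx])
      · rw [← hF2B t3 (by simp)]
        refine Aux.eRk_mono ?_
        intro x hx
        rcases hx with hx | hx
        · exact Or.inr hx
        · exact Or.inl (by rwa [mem_singleton_iff.1 hx])
    -- case 4 : s2,s3,t2,t3 all lie in U
    push_neg at hA hB
    have hWU : ({s2, s3, t2, t3} : Set α) ⊆ U := by
      intro x hx
      have hx' : x ∈ U ∪ V := hUV.symm ▸ hWsubE' hx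
      rcases hx' with h | h
      · exact h
      · exfalso
        simp only [mem_insert_iff, mem_singleton_iff] at hx
        rcases hx with rfl | rfl | rfl | rfl
        · exact hA.1 h
        · exact hA.2 h
        · exact hB.1 h
        · exact hB.2 h
    -- a circuit through s inside {s} ∪ {s2,s3,t2,t3}
    have h5sub : ({s} ∪ {s2, s3, t2, t3} : Set α) ⊆ {s, s2, s3} ∪ {t, t2, t3} := by
      intro x hx
      rcases hx with h | h
      · exact Or.inl (Or.inl (mem_singleton_iff.1 h))
      · simp only [mem_insert_iff, mem_singleton_iff] at h
        rcases h with rfl | rfl | rfl | rfl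
        · exact Or.inl (Or.inr (Or.inl rfl))
        · exact Or.inl (Or.inr (Or.inr rfl))
        · exact Or.inr (Or.inr (Or.inl rfl))
        · exact Or.inr (Or.inr (Or.inr rfl))
    have h5E : ({s} ∪ {s2, s3, t2, t3} : Set α) ⊆ M.E :=
      h5sub.trans (union_subset hS_subE hT_subE)
    have h5card : ({s} ∪ {s2, s3, t2, t3} : Set α).encard = 5 := by
      rw [singleton_union, encard_insert_of_notMem (by simp [hs_s2, hs_s3, hs_t2, hs_t3]),
        hWcard]
      norm_num
    have h5fin : ({s} ∪ {s2, s3, t2, t3} : Set α).Finite :=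
      (finite_singleton s).union ((((finite_singleton t3).insert t2).insert s3).insert s2)
    have hdep : M.Dep ({s} ∪ {s2, s3, t2, t3}) := by
      refine ⟨fun hind => ?_, h5E⟩
      have h1 := Aux.indep_eRk hind
      have hle : eRk M ({s} ∪ {s2, s3, t2, t3}) ≤ 4 := (Aux.eRk_mono h5sub).trans_eq hST4
      rw [h1, h5card] at hle
      norm_num at hle
    obtain ⟨C, hCsub, hC⟩ := Aux.dep_finite_contains_circuit hdep h5fin
    have hsC : s ∈ C := by
      by_contra hsC
      refine hC.1.not_indep (hWind.subset fun x hx => ?_)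
      rcases hCsub hx with h | h
      · exact absurd (mem_singleton_iff.1 h ▸ hx) hsC
      · exact h
    have hCfin : C.Finite := h5fin.subset hCsub
    have hCU : C \ {s} ⊆ U := by
      intro x hx
      rcases hCsub hx.1 with h | h
      · exact absurd h hx.2
      · exact hWU h
    have hCspan : eRk M ((C \ {s}) ∪ {s}) ≤ eRk M (C \ {s}) := by
      have h1 : (C \ {s}) ∪ {s} = C := by
        rw [union_singleton, insert_diff_singleton, insert_eq_self.2 hsC]
      rw [h1, Aux.circuit_spans hC hCfin hsC]
    have hUs : eRk M (U ∪ {s}) = eRk M U := Aux.spans_mono (hfinX _ hUsubE) hCspan hCU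
    have hUsE : U ∪ {s} ⊆ M.E := union_subset hUsubE (by simpa using hsE)
    have hUsd : eRk M ((U ∪ {s}) ∪ {d}) = eRk M (U ∪ {s}) :=
      Aux.spans_mono (hfinX _ hUsE) hUd.le subset_union_left
    -- this produces a 2-separation of M, contradiction
    have hX1E : ((U ∪ {s}) ∪ {d} : Set α) ⊆ M.E := union_subset hUsE (by simpa using hd)
    have hIC4 : M.E \ ((U ∪ {s}) ∪ {d}) = V ∪ {t} := by
      ext x
      simp only [mem_diff, mem_union, mem_singleton_iff, not_or]
      constructor
      · rintro ⟨hxE, ⟨hxU, hxs⟩, hxd⟩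
        by_cases hxt : x = t
        · exact Or.inr hxt
        · have hx' : x ∈ U ∪ V := by
            rw [hUV]
            refine ⟨hxE, ?_⟩
            simp only [mem_insert_iff, mem_singleton_iff, not_or]
            exact ⟨hxs, hxt, hxd⟩
          rcases hx' with h | h
          · exact absurd h hxU
          · exact Or.inl h
      · rintro (h | rfl)
        · obtain ⟨hxE, hxn⟩ := hVsubE' h
          simp only [mem_insert_iff, mem_singleton_iff, not_or] at hxn
          exact ⟨hxE, ⟨fun hxU => (Set.disjoint_left.1 hdisj) hxU h, hxn.1⟩, hxn.2.2⟩
        · refine ⟨htE, ⟨fun ht' => ?_, Ne.symm hs_t⟩, Ne.symm hd_t⟩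
          have := (hUsubE' ht').2
          simp at this
    have hsz1 : (2 : ℕ∞) ≤ (((U ∪ {s}) ∪ {d}) : Set α).encard := by
      have hsubp : ({s, d} : Set α) ⊆ (U ∪ {s}) ∪ {d} := by
        intro x hx
        simp only [mem_insert_iff, mem_singleton_iff] at hx
        rcases hx with rfl | rfl
        · exact Or.inl (Or.inr rfl)
        · exact Or.inr rfl
      calc (2 : ℕ∞) = ({s, d} : Set α).encard := (encard_pair (Ne.symm hd_s)).symm
        _ ≤ _ := encard_mono hsubp
    have hsz2 : (2 : ℕ∞) ≤ ((V ∪ {t}) : Set α).encard := by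
      obtain ⟨v, hv⟩ := hVne
      have hvt : v ≠ t := fun h => by
        have := (hVsubE' hv).2
        rw [h] at this
        simp at this
      have hsubp : ({v, t} : Set α) ⊆ V ∪ {t} := by
        intro x hx
        simp only [mem_insert_iff, mem_singleton_iff] at hx
        rcases hx with rfl | rfl
        · exact Or.inl hv
        · exact Or.inr rfl
      calc (2 : ℕ∞) = ({v, t} : Set α).encard := (encard_pair hvt).symm
        _ ≤ _ := encard_mono hsubp
    have hrank : eRk M ((U ∪ {s}) ∪ {d}) + eRk M (M.E \ ((U ∪ {s}) ∪ {d}))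
        ≤ eRk M M.E + ((2 - 1 : ℕ) : ℕ∞) := by
      rw [hIC4, hUsd, hUs, show ((2 - 1 : ℕ) : ℕ∞) = 1 by norm_num]
      calc eRk M U + eRk M (V ∪ {t}) ≤ eRk M U + (eRk M V + 1) :=
            add_le_add le_rfl (Aux.eRk_union_singleton_le M V t)
        _ = (eRk M U + eRk M V) + 1 := by rw [add_assoc]
        _ = eRk M M.E + 1 := by rw [huv]
    exact h3 2 (by norm_num) (by norm_num) ((U ∪ {s}) ∪ {d})
      ⟨hX1E, hrank, by exact_mod_cast hsz1, by rw [hIC4]; exact_mod_cast hsz2⟩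
  -- now the main argument
  intro k hk0 hk2 X hsep
  have hk1 : k = 1 := by omega
  subst hk1
  obtain ⟨hXsub, hsum, hX1, hY1⟩ := hsep
  have hNg : (del M {s, t}).E = M.E \ {s, t} := rfl
  rw [hNg] at hXsub hsum hY1
  have e1 : eRk (del M {s, t}) X = eRk M X := Aux.del_eRk M {s, t} X hXsub
  have e2 : eRk (del M {s, t}) ((M.E \ {s, t}) \ X) = eRk M ((M.E \ {s, t}) \ X) :=
    Aux.del_eRk M {s, t} _ diff_subset
  have e3 : eRk (del M {s, t}) (M.E \ {s, t}) = eRk M (M.E \ {s, t}) :=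
    Aux.del_eRk M {s, t} _ subset_rfl
  rw [e1, e2, e3, hNEr, show ((1 - 1 : ℕ) : ℕ∞) = 0 by norm_num, add_zero] at hsum
  have hXne : X.Nonempty := by
    rw [← Set.one_le_encard_iff_nonempty]
    exact_mod_cast hX1
  have hYne : ((M.E \ {s, t}) \ X).Nonempty := by
    rw [← Set.one_le_encard_iff_nonempty]
    exact_mod_cast hY1
  have hdNE : d ∈ M.E \ {s, t} := by
    refine ⟨hd, ?_⟩
    simp only [mem_insert_iff, mem_singleton_iff, not_or]
    exact ⟨hd_s, hd_t⟩
  have hE'eq : (M.E \ {s, t}) \ {d} = M.E \ {s, t, d} := by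
    rw [diff_diff]
    congr 1
    ext x
    simp only [mem_union, mem_insert_iff, mem_singleton_iff]
    constructor
    · rintro ((rfl | rfl) | rfl)
      · exact Or.inl rfl
      · exact Or.inr (Or.inl rfl)
      · exact Or.inr (Or.inr rfl)
    · rintro (rfl | rfl | rfl)
      · exact Or.inl (Or.inl rfl)
      · exact Or.inl (Or.inr rfl)
      · exact Or.inr rfl
  have hXY : X ∪ ((M.E \ {s, t}) \ X) = M.E \ {s, t} := union_diff_cancel hXsub
  by_cases hdX : d ∈ X
  · refine hcore (X \ {d}) ((M.E \ {s, t}) \ X) ?_ ?_ hYne ?_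
    · rw [← hE'eq]
      apply Subset.antisymm
      · refine union_subset (diff_subset_diff (subset_union_left.trans hXY.subset) subset_rfl) ?_
        intro x hx
        exact ⟨hXY ▸ Or.inr hx, fun h => hx.2 (mem_singleton_iff.1 h ▸ hdX)⟩
      · intro x hx
        have hx' : x ∈ X ∪ ((M.E \ {s, t}) \ X) := hXY.symm ▸ hx.1
        rcases hx' with h | h
        · exact Or.inl ⟨h, hx.2⟩
        · exact Or.inr h
    · exact (disjoint_sdiff_right (s := X)).mono_left diff_subset
    · have hXd : (X \ {d}) ∪ {d} = X := by
        rw [union_singleton, insert_diff_singleton, insert_eq_self.2 hdX]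
      rw [hXd]
      exact hsum
  · have hdY : d ∈ (M.E \ {s, t}) \ X := ⟨hdNE, hdX⟩
    refine hcore (((M.E \ {s, t}) \ X) \ {d}) X ?_ ?_ hXne ?_
    · rw [← hE'eq]
      apply Subset.antisymm
      · refine union_subset (diff_subset_diff (subset_union_right.trans hXY.subset) subset_rfl) ?_
        intro x hx
        exact ⟨hXY ▸ Or.inl hx, fun h => hdX (mem_singleton_iff.1 h ▸ hx)⟩
      · intro x hx
        have hx' : x ∈ X ∪ ((M.E \ {s, t}) \ X) := hXY.symm ▸ hx.1
        rcases hx' with h | h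
        · exact Or.inr h
        · exact Or.inl ⟨h, hx.2⟩
    · exact (disjoint_sdiff_right (s := X)).symm.mono_left diff_subset
    · have hYd : (((M.E \ {s, t}) \ X) \ {d}) ∪ {d} = (M.E \ {s, t}) \ X := by
        rw [union_singleton, insert_diff_singleton, insert_eq_self.2 hdY]
      rw [hYd, add_comm]
      exact hsum
end
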